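/- arXiv:1003.1670 — 5 statements merged into one kernel-verified Lean document; each statement's English description precedes it below -/
import Mathlib

section
/- Let n be a positive integer, let M be an invertible complex n×n matrix, and let η be a vector in ℂⁿ such that I - M M* = η η*. Then 1 - ‖η‖² > 0. -/
/-- Embedding of a plain vector into Euclidean space (to use the Euclidean norm). -/
noncomputable def euc {n : ℕ} (v : Fin n → ℂ) : EuclideanSpace ℂ (Fin n) :=
  (WithLp.equiv 2 (Fin n → ℂ)).symm v

/-!
Applying the hypothesis to `η` gives `M Mᴴ η = (1 - ‖η‖²) η`, so pairing with `η` yields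
`(1 - ‖η‖²) ‖η‖² = η* M Mᴴ η`, which is positive for `η ≠ 0` because `M Mᴴ` is positive definite.
-/

open Matrix
-- On `𝕜`, `0 < z` means that `z` is real and positive.
open scoped ComplexOrder

section
variable {𝕜 ι : Type*} [RCLike 𝕜] [Fintype ι]

theorem EuclideanSpace.ofReal_norm_sq_eq_star_dotProduct (x : EuclideanSpace 𝕜 ι) :
    ((‖x‖ ^ 2 : ℝ) : 𝕜) = star x.ofLp ⬝ᵥ x.ofLp := by
  have := inner_self_eq_norm_sq_to_K (𝕜 := 𝕜) x
  rw [EuclideanSpace.inner_eq_star_dotProduct, dotProduct_comm] at this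
  exact_mod_cast this.symm

variable [DecidableEq ι]

theorem Matrix.mul_conjTranspose_mulVec_eq_smul {M : Matrix ι ι 𝕜} {η : ι → 𝕜}
    (h : 1 - M * Mᴴ = vecMulVec η (star η)) : (M * Mᴴ) *ᵥ η = (1 - star η ⬝ᵥ η) • η := by
  rw [← sub_sub_cancel 1 (M * Mᴴ), h, sub_mulVec, one_mulVec, vecMulVec_mulVec, op_smul_eq_smul,
    sub_smul, one_smul]

theorem Matrix.one_sub_dotProduct_star_self_pos {M : Matrix ι ι 𝕜} (hM : IsUnit M) {η : ι → 𝕜}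
    (h : 1 - M * Mᴴ = vecMulVec η (star η)) : 0 < 1 - star η ⬝ᵥ η := by
  rcases eq_or_ne η 0 with rfl | hη
  · simp
  set s := star η ⬝ᵥ η
  have hs : 0 < s := dotProduct_star_self_pos_iff.2 hη
  have hpos : 0 < (1 - s) * s := by
    have := (PosDef.mul_conjTranspose_self M
      (vecMul_injective_iff_isUnit.2 hM)).dotProduct_mulVec_pos hη
    rwa [mul_conjTranspose_mulVec_eq_smul h, dotProduct_smul, smul_eq_mul] at this
  calc 0 < (1 - s) * s * s⁻¹ := mul_pos hpos (RCLike.inv_pos.2 hs)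
    _ = 1 - s := mul_inv_cancel_right₀ hs.ne' _

end

theorem stmt_0_general (n : ℕ) (M : Matrix (Fin n) (Fin n) ℂ)
    (hM : IsUnit M) (η : Fin n → ℂ)
    (h : (1 : Matrix (Fin n) (Fin n) ℂ) - M * M.conjTranspose
        = Matrix.vecMulVec η (star η)) :
    0 < 1 - ‖euc η‖ ^ 2 := by
  have hpos : 0 < 1 - star (euc η).ofLp ⬝ᵥ (euc η).ofLp := one_sub_dotProduct_star_self_pos hM h
  rwa [← EuclideanSpace.ofReal_norm_sq_eq_star_dotProduct, ← RCLike.ofReal_one,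
    ← RCLike.ofReal_sub, RCLike.ofReal_pos] at hpos

theorem stmt_0 (n : ℕ) (hn : 0 < n) (M : Matrix (Fin n) (Fin n) ℂ)
    (hM : IsUnit M) (η : Fin n → ℂ)
    (h : (1 : Matrix (Fin n) (Fin n) ℂ) - M * M.conjTranspose
        = Matrix.vecMulVec η (star η)) :
    0 < 1 - ‖euc η‖ ^ 2 :=
  stmt_0_general n M hM η h
end

section
/- Let n be a positive integer, let M be an invertible complex n×n matrix, and let η be a vector in ℂⁿ such that I - M M* = η η*. Define η̃ := (1 - ‖η‖²)^{-1/2} · M* η (which is well-defined since 1 - ‖η‖² > 0). Then I - M* M = η̃ η̃*. -/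
/-!
Write `P = η η*` and `t = ‖η‖² = η* η`, so that `P² = t P` and `M M* = I - P`. Conjugating by the
invertible `M`, the claim `(1 - t)(I - M* M) = (M* η)(M* η)*` becomes
`(1 - t)(M M* - (M M*)²) = (M M*) P (M M*)`, and both sides equal `(1 - t)² P`.
The normalisation is legitimate because, by the matrix determinant lemma,
`1 - t = det (I - P) = det (M M*) = |det M|² > 0`.
-/

open Matrix

namespace Matrix

variable {R m : Type*} [CommRing R] [Fintype m]

theorem det_one_sub_vecMulVec [DecidableEq m] (u v : m → R) :
    det (1 - vecMulVec u v) = 1 - v ⬝ᵥ u := by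
  rw [vecMulVec_eq Unit, det_one_sub_mul_comm, det_unique, sub_apply, one_apply_eq,
    replicateRow_mul_replicateCol_apply]

variable [StarRing R]

theorem conjTranspose_mul_vecMulVec_star_mul (M : Matrix m m R) (v : m → R) :
    Mᴴ * vecMulVec v (star v) * M = vecMulVec (Mᴴ *ᵥ v) (star (Mᴴ *ᵥ v)) := by
  rw [mul_vecMulVec, vecMulVec_mul, star_mulVec, conjTranspose_conjTranspose]

theorem vecMulVec_star_mul_self (v : m → R) :
    vecMulVec v (star v) * vecMulVec v (star v) = (star v ⬝ᵥ v) • vecMulVec v (star v) := by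
  rw [vecMulVec_mul_vecMulVec, vecMulVec_smul]

variable [DecidableEq m] {M : Matrix m m R} {η : m → R}

theorem one_sub_star_dotProduct_self_eq_det_mul_star
    (h : 1 - M * Mᴴ = vecMulVec η (star η)) : 1 - star η ⬝ᵥ η = det M * star (det M) := by
  rw [← det_one_sub_vecMulVec, ← h, sub_sub_cancel, det_mul, det_conjTranspose]

theorem smul_one_sub_conjTranspose_mul_self (hM : IsUnit M)
    (h : 1 - M * Mᴴ = vecMulVec η (star η)) :
    (1 - star η ⬝ᵥ η) • (1 - Mᴴ * M) = vecMulVec (Mᴴ *ᵥ η) (star (Mᴴ *ᵥ η)) := by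
  set P := vecMulVec η (star η)
  set t := star η ⬝ᵥ η
  have hP : P * P = t • P := vecMulVec_star_mul_self η
  have hQ : M * Mᴴ = 1 - P := by rw [← h, sub_sub_cancel]
  have hMt : IsUnit Mᴴ := by simpa using hM.star
  refine hM.mul_left_cancel (hMt.mul_right_cancel ?_)
  rw [← conjTranspose_mul_vecMulVec_star_mul]
  calc M * ((1 - t) • (1 - Mᴴ * M)) * Mᴴ
      = (1 - t) • (M * Mᴴ - M * Mᴴ * (M * Mᴴ)) := by
        simp only [mul_smul_comm, smul_mul_assoc, mul_sub, sub_mul, mul_one, mul_assoc]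
    _ = M * Mᴴ * P * (M * Mᴴ) := by
        rw [hQ]
        simp only [mul_sub, sub_mul, mul_one, one_mul, smul_mul_assoc, hP]
        module
    _ = M * (Mᴴ * P * M) * Mᴴ := by simp only [mul_assoc]

end Matrix

theorem star_dotProduct_self_eq_norm_toLp_sq {𝕜 ι : Type*} [RCLike 𝕜] [Fintype ι]
    (v : ι → 𝕜) : star v ⬝ᵥ v = ((‖WithLp.toLp 2 v‖ ^ 2 : ℝ) : 𝕜) := by
  rw [RCLike.ofReal_pow, ← inner_self_eq_norm_sq_to_K, EuclideanSpace.inner_toLp_toLp,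
    dotProduct_comm]

theorem stmt_1_general (n : ℕ) (M : Matrix (Fin n) (Fin n) ℂ)
    (hM : IsUnit M) (η : Fin n → ℂ)
    (h : (1 : Matrix (Fin n) (Fin n) ℂ) - M * M.conjTranspose
        = Matrix.vecMulVec η (star η)) :
    (1 : Matrix (Fin n) (Fin n) ℂ) - M.conjTranspose * M
      = Matrix.vecMulVec ((Real.sqrt (1 - ‖euc η‖ ^ 2))⁻¹ • M.conjTranspose.mulVec η)
          (star ((Real.sqrt (1 - ‖euc η‖ ^ 2))⁻¹ • M.conjTranspose.mulVec η)) := by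
  set t := ‖euc η‖ ^ 2
  have ht : star η ⬝ᵥ η = (t : ℂ) := star_dotProduct_self_eq_norm_toLp_sq η
  have ht_pos : 0 < 1 - t := by
    have hdet := one_sub_star_dotProduct_self_eq_det_mul_star h
    rw [ht, Complex.star_def, Complex.mul_conj] at hdet
    have hnormSq : 1 - t = Complex.normSq (det M) := by exact_mod_cast hdet
    exact hnormSq ▸ Complex.normSq_pos.2 ((isUnit_iff_isUnit_det M).1 hM).ne_zero
  set r := (Real.sqrt (1 - t))⁻¹
  have hr : ((r * r : ℝ) : ℂ) * (1 - t) = 1 := by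
    norm_cast
    rw [← mul_inv, Real.mul_self_sqrt ht_pos.le, inv_mul_cancel₀ ht_pos.ne']
  rw [star_smul, star_trivial, smul_vecMulVec, vecMulVec_smul, smul_smul,
    ← smul_one_sub_conjTranspose_mul_self hM h, ht, ← smul_assoc, Complex.real_smul, hr,
    one_smul]

theorem stmt_1 (n : ℕ) (hn : 0 < n) (M : Matrix (Fin n) (Fin n) ℂ)
    (hM : IsUnit M) (η : Fin n → ℂ)
    (h : (1 : Matrix (Fin n) (Fin n) ℂ) - M * M.conjTranspose
        = Matrix.vecMulVec η (star η)) :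
    (1 : Matrix (Fin n) (Fin n) ℂ) - M.conjTranspose * M
      = Matrix.vecMulVec ((Real.sqrt (1 - ‖euc η‖ ^ 2))⁻¹ • M.conjTranspose.mulVec η)
          (star ((Real.sqrt (1 - ‖euc η‖ ^ 2))⁻¹ • M.conjTranspose.mulVec η)) :=
  stmt_1_general n M hM η h
end

section
/- Let n be a positive integer, let M be an invertible complex n×n matrix, and let η ∈ ℂⁿ satisfy I - M M* = η η*. Then for every h ∈ ℂⁿ, ‖M h‖ ≥ (1 - ‖η‖²)^{1/2} ‖h‖. -/
open Matrix ContinuousLinearMap InnerProductSpace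
open scoped InnerProduct

section

variable {𝕜 E : Type*} [RCLike 𝕜] [NormedAddCommGroup E] [InnerProductSpace 𝕜 E]

theorem one_sub_norm_sq_mul_le_norm_sub_inner_smul_sq (η x : E) :
    (1 - ‖η‖ ^ 2) * (‖x‖ ^ 2 - ‖⟪η, x⟫_𝕜‖ ^ 2) ≤ ‖x - ⟪η, x⟫_𝕜 • η‖ ^ 2 := by
  set t := ⟪η, x⟫_𝕜
  have hexpand : ‖x - t • η‖ ^ 2 = ‖x‖ ^ 2 - 2 * ‖t‖ ^ 2 + ‖t‖ ^ 2 * ‖η‖ ^ 2 := by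
    rw [norm_sub_sq (𝕜 := 𝕜), inner_smul_right, ← inner_conj_symm, RCLike.mul_conj, norm_smul]
    norm_cast
    ring
  have hcs : ‖t‖ ^ 2 ≤ ‖η‖ ^ 2 * ‖x‖ ^ 2 := by
    rw [← mul_pow]
    exact pow_le_pow_left₀ (norm_nonneg _) (norm_inner_le_norm η x) 2
  nlinarith

variable [CompleteSpace E]

theorem norm_sq_adjoint_apply_of_mul_adjoint_eq {T : E →L[𝕜] E} {η : E}
    (hT : T * T† = 1 - rankOne 𝕜 η η) (x : E) :
    ‖(T†) x‖ ^ 2 = ‖x‖ ^ 2 - ‖⟪η, x⟫_𝕜‖ ^ 2 := by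
  rw [@norm_sq_eq_re_inner 𝕜, @norm_sq_eq_re_inner 𝕜 _ _ _ _ x, adjoint_inner_left,
    ← mul_apply_eq_comp, hT]
  simp only [_root_.sub_apply, one_apply_eq_self, rankOne_apply, inner_sub_right, inner_smul_right,
    ← inner_conj_symm x η, RCLike.mul_conj, map_sub, ← RCLike.ofReal_pow, RCLike.ofReal_re]

theorem sqrt_one_sub_norm_sq_mul_le_norm_apply {T : E →L[𝕜] E} {η : E}
    (hT : T * T† = 1 - rankOne 𝕜 η η) (hsurj : Function.Surjective (T†)) (v : E) :
    √(1 - ‖η‖ ^ 2) * ‖v‖ ≤ ‖T v‖ := by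
  obtain ⟨x, rfl⟩ := hsurj v
  have hTT : T ((T†) x) = x - ⟪η, x⟫_𝕜 • η := by
    rw [← mul_apply_eq_comp, hT]
    rfl
  have key : (1 - ‖η‖ ^ 2) * ‖(T†) x‖ ^ 2 ≤ ‖T ((T†) x)‖ ^ 2 := by
    rw [hTT, norm_sq_adjoint_apply_of_mul_adjoint_eq hT]
    exact one_sub_norm_sq_mul_le_norm_sub_inner_smul_sq η x
  calc √(1 - ‖η‖ ^ 2) * ‖(T†) x‖ = √((1 - ‖η‖ ^ 2) * ‖(T†) x‖ ^ 2) := by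
        rw [Real.sqrt_mul' _ (sq_nonneg _), Real.sqrt_sq (norm_nonneg _)]
    _ ≤ √(‖T ((T†) x)‖ ^ 2) := Real.sqrt_le_sqrt key
    _ = ‖T ((T†) x)‖ := Real.sqrt_sq (norm_nonneg _)

end

theorem Matrix.toEuclideanCLM_vecMulVec_star {𝕜 n : Type*} [RCLike 𝕜] [Fintype n]
    [DecidableEq n] (x y : n → 𝕜) :
    toEuclideanCLM (n := n) (𝕜 := 𝕜) (vecMulVec x (star y)) =
      rankOne 𝕜 (WithLp.toLp 2 x) (WithLp.toLp 2 y) := by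
  apply ContinuousLinearMap.coe_injective
  rw [coe_toEuclideanCLM_eq_toEuclideanLin, ← symm_toEuclideanLin_rankOne,
    LinearEquiv.apply_symm_apply]

theorem stmt_2_general (n : ℕ) (M : Matrix (Fin n) (Fin n) ℂ)
    (hM : IsUnit M) (η : Fin n → ℂ)
    (h : (1 : Matrix (Fin n) (Fin n) ℂ) - M * M.conjTranspose
        = Matrix.vecMulVec η (star η)) :
    ∀ h' : Fin n → ℂ, ‖euc (M.mulVec h')‖ ≥ Real.sqrt (1 - ‖euc η‖ ^ 2) * ‖euc h'‖ := by
  intro v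
  set T := toEuclideanCLM (n := Fin n) (𝕜 := ℂ) M
  have hadj : T† = toEuclideanCLM (n := Fin n) (𝕜 := ℂ) (star M) := by
    rw [map_star, star_eq_adjoint]
  have hT : T * T† = 1 - rankOne ℂ (euc η) (euc η) := by
    rw [hadj, ← map_mul, star_eq_conjTranspose, euc, WithLp.equiv_symm_apply,
      ← toEuclideanCLM_vecMulVec_star, ← h, ← map_one (toEuclideanCLM (n := Fin n) (𝕜 := ℂ)),
      ← map_sub, sub_sub_cancel]
  have hsurj : Function.Surjective (T†) := by
    rw [hadj]
    exact (isUnit_iff_bijective.mp (hM.star.map _)).surjective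
  exact sqrt_one_sub_norm_sq_mul_le_norm_apply hT hsurj (euc v)

theorem stmt_2 (n : ℕ) (hn : 0 < n) (M : Matrix (Fin n) (Fin n) ℂ)
    (hM : IsUnit M) (η : Fin n → ℂ)
    (h : (1 : Matrix (Fin n) (Fin n) ℂ) - M * M.conjTranspose
        = Matrix.vecMulVec η (star η)) :
    ∀ h' : Fin n → ℂ, ‖euc (M.mulVec h')‖ ≥ Real.sqrt (1 - ‖euc η‖ ^ 2) * ‖euc h'‖ :=
  stmt_2_general n M hM η h
end

section
/- Let n be a positive integer, let γ = (γ₁,…,γₙ) be complex numbers of modulus less than 1, set D_{γⱼ} := √(1 - |γⱼ|²), and let Mₙ(γ) be the lower-triangular n×n matrix with diagonal entries (Mₙ)_{kk} = D_{γ_k} and, for k > i, entries (Mₙ)_{ki} = -γ_i · (∏_{j=i+1}^{k-1} D_{γⱼ}) · conj(γ_k). Then I - Mₙ(γ) Mₙ(γ)* = ηₙ(γ) ηₙ(γ)*, where ηₙ(γ) is the column vector with entries conj(γ_k)·∏_{j=1}^{k-1} D_{γⱼ}. -/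
/-- The lower-triangular matrix `Mₙ(γ)` built from Schur parameters `γ`. -/
noncomputable def schurM (n : ℕ) (γ : ℕ → ℂ) : Matrix (Fin n) (Fin n) ℂ :=
  Matrix.of fun k i =>
    if (k : ℕ) = (i : ℕ) then (Real.sqrt (1 - ‖γ (k : ℕ)‖ ^ 2) : ℂ)
    else if (i : ℕ) < (k : ℕ) then
      -γ (i : ℕ) * (∏ j ∈ Finset.Ico ((i : ℕ) + 1) (k : ℕ),
          (Real.sqrt (1 - ‖γ j‖ ^ 2) : ℂ)) * (starRingEnd ℂ) (γ (k : ℕ))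
    else 0

/-- The vector `ηₙ(γ)` built from Schur parameters `γ`. -/
noncomputable def schurEta (n : ℕ) (γ : ℕ → ℂ) : Fin n → ℂ := fun k =>
  (starRingEnd ℂ) (γ (k : ℕ)) * ∏ j ∈ Finset.range (k : ℕ), (Real.sqrt (1 - ‖γ j‖ ^ 2) : ℂ)

/-!
Write `D j = √(1 - ‖γ j‖²)` and `P a b = ∏_{a ≤ j < b} D j`. For `i ≤ k`, the `l`-th term of
`(M M*)_{ki}` with `l < i` equals `conj (γ k) γ i P i k · ‖γ l‖² P (l+1) i ²`; since
`‖γ l‖² = 1 - D l ²` these terms telescope to `conj (γ k) γ i P i k (1 - P 0 i ²)`. Adding the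
diagonal term `l = i` and `η_k conj η_i` leaves `δ_{ki}`. Both sides of the identity are
Hermitian, so the entries with `i ≤ k` suffice.
-/

open Finset ComplexConjugate
open scoped ComplexOrder

theorem Matrix.IsHermitian.ext_of_le {ι α : Type*} [LinearOrder ι] [Star α]
    {A B : Matrix ι ι α} (hA : A.IsHermitian) (hB : B.IsHermitian)
    (h : ∀ k i, i ≤ k → A k i = B k i) : A = B := by
  ext k i
  rcases le_total i k with hik | hki
  · exact h k i hik
  · rw [← hA.apply, ← hB.apply, h i k hki]

theorem Finset.sum_range_one_sub_mul_prod_Ico {R : Type*} [CommRing R] (c : ℕ → R) (m : ℕ) :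
    ∑ l ∈ range m, (1 - c l) * ∏ j ∈ Ico (l + 1) m, c j = 1 - ∏ j ∈ range m, c j := by
  induction m with
  | zero => simp
  | succ m ih =>
    have hshift : ∀ l ∈ range m, (1 - c l) * ∏ j ∈ Ico (l + 1) (m + 1), c j
        = (1 - c l) * (∏ j ∈ Ico (l + 1) m, c j) * c m := fun l hl => by
      rw [prod_Ico_succ_top (mem_range.mp hl), mul_assoc]
    rw [sum_range_succ, sum_congr rfl hshift, ← sum_mul, ih, prod_range_succ, Ico_self,
      prod_empty]
    ring

section Schur

variable (γ : ℕ → ℂ)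

noncomputable def schurD (j : ℕ) : ℂ := (Real.sqrt (1 - ‖γ j‖ ^ 2) : ℂ)

noncomputable def schurEntry (k l : ℕ) : ℂ :=
  if k = l then schurD γ k
  else if l < k then -γ l * (∏ j ∈ Ico (l + 1) k, schurD γ j) * conj (γ k)
  else 0

variable {γ}

theorem schurM_apply {n : ℕ} (k i : Fin n) : schurM n γ k i = schurEntry γ k i := rfl

theorem schurEta_apply {n : ℕ} (k : Fin n) :
    schurEta n γ k = conj (γ k) * ∏ j ∈ range k, schurD γ j := rfl

theorem conj_schurD (j : ℕ) : conj (schurD γ j) = schurD γ j := Complex.conj_ofReal _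

theorem mul_conj_add_schurD_sq {j : ℕ} (h : ‖γ j‖ ≤ 1) :
    γ j * conj (γ j) + schurD γ j ^ 2 = 1 := by
  have h0 : (0 : ℝ) ≤ 1 - ‖γ j‖ ^ 2 := by nlinarith [norm_nonneg (γ j)]
  rw [schurD, ← Complex.ofReal_pow, Real.sq_sqrt h0, Complex.mul_conj, Complex.normSq_eq_norm_sq]
  push_cast
  ring

theorem schurEntry_of_lt {k l : ℕ} (h : k < l) : schurEntry γ k l = 0 := by
  simp [schurEntry, h.ne, h.not_gt]

theorem schurEntry_mul_conj_of_lt {i k l : ℕ} (hli : l < i) (hik : i ≤ k) (hl : ‖γ l‖ ≤ 1) :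
    schurEntry γ k l * conj (schurEntry γ i l)
      = conj (γ k) * γ i * (∏ j ∈ Ico i k, schurD γ j)
        * ((1 - schurD γ l ^ 2) * ∏ j ∈ Ico (l + 1) i, schurD γ j ^ 2) := by
  have hlk : l < k := hli.trans_le hik
  simp only [schurEntry, hli.ne', hlk.ne', hli, hlk, if_false, if_true, map_mul, map_neg,
    map_prod, conj_schurD, Complex.conj_conj]
  rw [← prod_Ico_consecutive _ hli hik, prod_pow, ← mul_conj_add_schurD_sq hl]
  ring

theorem sum_range_schurEntry_mul_conj {i k : ℕ} (hik : i ≤ k) (hγ : ∀ j < i, ‖γ j‖ ≤ 1) :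
    ∑ l ∈ range i, schurEntry γ k l * conj (schurEntry γ i l)
      = conj (γ k) * γ i * (∏ j ∈ Ico i k, schurD γ j)
        * (1 - (∏ j ∈ range i, schurD γ j) ^ 2) := by
  rw [sum_congr rfl fun l hl => schurEntry_mul_conj_of_lt (mem_range.mp hl) hik
    (hγ l (mem_range.mp hl)), ← mul_sum, ← prod_pow, sum_range_one_sub_mul_prod_Ico]

theorem sum_schurEntry_mul_conj_of_le {i k : ℕ} (hik : i ≤ k) (hγ : ∀ j ≤ i, ‖γ j‖ ≤ 1) :
    ∑ l ∈ range (i + 1), schurEntry γ k l * conj (schurEntry γ i l)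
      = (if k = i then 1 else 0) - conj (γ k) * (∏ j ∈ range k, schurD γ j)
        * conj (conj (γ i) * ∏ j ∈ range i, schurD γ j) := by
  rw [sum_range_succ, sum_range_schurEntry_mul_conj hik fun j hj => hγ j hj.le]
  simp only [map_mul, map_prod, conj_schurD, Complex.conj_conj]
  rcases hik.eq_or_lt with rfl | hik
  · have hnorm := mul_conj_add_schurD_sq (hγ i le_rfl)
    simp only [schurEntry, if_true, conj_schurD, Ico_self, prod_empty]
    linear_combination hnorm
  · rw [← prod_range_mul_prod_Ico _ hik.le, prod_eq_prod_Ico_succ_bot hik]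
    simp only [schurEntry, hik.ne', hik, lt_irrefl, if_true, if_false, conj_schurD]
    ring

theorem one_sub_schurM_mul_conjTranspose_apply_of_le {n : ℕ} {k i : Fin n} (hik : i ≤ k)
    (hγ : ∀ j ≤ (i : ℕ), ‖γ j‖ ≤ 1) :
    (1 - schurM n γ * (schurM n γ).conjTranspose) k i
      = Matrix.vecMulVec (schurEta n γ) (star (schurEta n γ)) k i := by
  have htrunc : ∑ l ∈ range n, schurEntry γ k l * conj (schurEntry γ i l)
      = ∑ l ∈ range (i + 1), schurEntry γ k l * conj (schurEntry γ i l) := by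
    refine (sum_subset (range_subset_range.mpr i.2) fun l _ hl => ?_).symm
    rw [schurEntry_of_lt (not_lt.mp (mem_range.not.mp hl)), map_zero, mul_zero]
  rw [Matrix.sub_apply, Matrix.one_apply, Matrix.mul_apply, Matrix.vecMulVec_apply]
  simp only [Matrix.conjTranspose_apply, Pi.star_apply, Complex.star_def, schurM_apply,
    schurEta_apply]
  rw [Fin.sum_univ_eq_sum_range (fun l => schurEntry γ k l * conj (schurEntry γ i l)) n,
    htrunc, sum_schurEntry_mul_conj_of_le hik hγ]
  simp only [Fin.val_inj, sub_sub_cancel]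

end Schur

theorem stmt_7_general (n : ℕ) (γ : ℕ → ℂ) (hγ : ∀ j < n, ‖γ j‖ < 1) :
    (1 : Matrix (Fin n) (Fin n) ℂ) - schurM n γ * (schurM n γ).conjTranspose
      = Matrix.vecMulVec (schurEta n γ) (star (schurEta n γ)) :=
  Matrix.IsHermitian.ext_of_le
    (Matrix.isHermitian_one.sub (Matrix.isHermitian_mul_conjTranspose_self _))
    (Matrix.posSemidef_vecMulVec_self_star _).isHermitian
    fun _ i hik => one_sub_schurM_mul_conjTranspose_apply_of_le hik
      fun j hj => (hγ j (hj.trans_lt i.2)).le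

theorem stmt_7 (n : ℕ) (hn : 0 < n) (γ : ℕ → ℂ) (hγ : ∀ j < n, ‖γ j‖ < 1) :
    (1 : Matrix (Fin n) (Fin n) ℂ) - schurM n γ * (schurM n γ).conjTranspose
      = Matrix.vecMulVec (schurEta n γ) (star (schurEta n γ)) :=
  stmt_7_general n γ hγ
end

section
/- Let n be a positive integer and let γ₁,…,γₙ be complex numbers of modulus less than 1. Then the matrix Mₙ(γ) (lower-triangular with diagonal entries √(1-|γ_k|²) and below-diagonal entries (Mₙ)_{ki} = -γ_i (∏_{j=i+1}^{k-1} √(1-|γⱼ|²)) conj(γ_k)) is invertible, and for every h ∈ ℂⁿ both ‖Mₙ(γ) h‖ ≥ (∏_{j=1}^{n} √(1-|γⱼ|²)) ‖h‖ and ‖Mₙ(γ)* h‖ ≥ (∏_{j=1}^{n} √(1-|γⱼ|²)) ‖h‖ hold. -/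
open Matrix Finset

theorem LinearMap.mul_norm_le_norm_adjoint_apply {𝕜 E : Type*} [RCLike 𝕜] [NormedAddCommGroup E]
    [InnerProductSpace 𝕜 E] [FiniteDimensional 𝕜 E] {T : E →ₗ[𝕜] E}
    (hT : Function.Surjective T) {c : ℝ} (hc : 0 ≤ c) (hbound : ∀ x, c * ‖x‖ ≤ ‖T x‖) (x : E) :
    c * ‖x‖ ≤ ‖T.adjoint x‖ := by
  obtain ⟨z, rfl⟩ := hT x
  have hsq : ‖T z‖ ^ 2 ≤ ‖T.adjoint (T z)‖ * ‖z‖ := by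
    rw [← inner_self_eq_norm_sq (𝕜 := 𝕜), ← LinearMap.adjoint_inner_left]
    exact (RCLike.re_le_norm _).trans (norm_inner_le_norm _ _)
  have hz := hbound z
  rcases (norm_nonneg (T z)).eq_or_lt with h0 | hpos
  · rw [← h0, mul_zero]; exact norm_nonneg _
  · nlinarith [norm_nonneg (T.adjoint (T z))]

theorem Matrix.mul_norm_le_norm_conjTranspose_mulVec {𝕜 ι : Type*} [RCLike 𝕜] [Fintype ι]
    [DecidableEq ι] {A : Matrix ι ι 𝕜} (hA : IsUnit A) {c : ℝ} (hc : 0 ≤ c)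
    (hbound : ∀ v : ι → 𝕜, c * ‖WithLp.toLp 2 v‖ ≤ ‖WithLp.toLp 2 (A *ᵥ v)‖) (v : ι → 𝕜) :
    c * ‖WithLp.toLp 2 v‖ ≤ ‖WithLp.toLp 2 (Aᴴ *ᵥ v)‖ := by
  have hsurj : Function.Surjective (toEuclideanLin A) := fun y => by
    obtain ⟨w, hw⟩ := mulVec_surjective_iff_isUnit.2 hA y.ofLp
    exact ⟨WithLp.toLp 2 w, by simp [hw]⟩
  have := LinearMap.mul_norm_le_norm_adjoint_apply hsurj hc (fun x => hbound x.ofLp)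
    (WithLp.toLp 2 v)
  rwa [← toEuclideanLin_conjTranspose_eq_adjoint] at this

noncomputable def schurRho (γ : ℕ → ℂ) (j : ℕ) : ℝ := √(1 - ‖γ j‖ ^ 2)

lemma schurRho_nonneg (γ : ℕ → ℂ) (j : ℕ) : 0 ≤ schurRho γ j := Real.sqrt_nonneg _

lemma schurRho_sq {γ : ℕ → ℂ} {j : ℕ} (hj : ‖γ j‖ ≤ 1) : schurRho γ j ^ 2 = 1 - ‖γ j‖ ^ 2 :=
  Real.sq_sqrt (by nlinarith [norm_nonneg (γ j)])

lemma schurRho_pos {γ : ℕ → ℂ} {j : ℕ} (hj : ‖γ j‖ < 1) : 0 < schurRho γ j :=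
  Real.sqrt_pos.2 (by nlinarith [norm_nonneg (γ j)])

noncomputable def schurState (γ h : ℕ → ℂ) (k : ℕ) : ℂ :=
  ∑ i ∈ range k, γ i * (∏ j ∈ Ico (i + 1) k, (schurRho γ j : ℂ)) * h i

noncomputable def schurOutput (γ h : ℕ → ℂ) (k : ℕ) : ℂ :=
  schurRho γ k * h k - starRingEnd ℂ (γ k) * schurState γ h k

lemma schurState_succ (γ h : ℕ → ℂ) (k : ℕ) :
    schurState γ h (k + 1) = schurRho γ k * schurState γ h k + γ k * h k := by
  rw [schurState, sum_range_succ, Ico_self, prod_empty, schurState, mul_sum]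
  congr 1
  · refine sum_congr rfl fun i hi => ?_
    rw [prod_Ico_succ_top (mem_range.1 hi)]
    ring
  · ring

lemma norm_sq_schurOutput_add_norm_sq_schurState_succ (γ h : ℕ → ℂ) {k : ℕ} (hk : ‖γ k‖ ≤ 1) :
    ‖schurOutput γ h k‖ ^ 2 + ‖schurState γ h (k + 1)‖ ^ 2 =
      ‖h k‖ ^ 2 + ‖schurState γ h k‖ ^ 2 := by
  have hrot : ((schurRho γ k : ℝ) : ℂ) ^ 2 + γ k * starRingEnd ℂ (γ k) = 1 := by
    rw [Complex.mul_conj, Complex.normSq_eq_norm_sq]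
    exact_mod_cast (by rw [schurRho_sq hk]; ring)
  apply Complex.ofReal_injective
  push_cast [← Complex.mul_conj', schurOutput, schurState_succ]
  simp only [map_sub, map_add, map_mul, Complex.conj_conj, Complex.conj_ofReal]
  linear_combination
    (h k * starRingEnd ℂ (h k) + schurState γ h k * starRingEnd ℂ (schurState γ h k)) * hrot

lemma sum_norm_sq_schurOutput_add_norm_sq_schurState (γ h : ℕ → ℂ) {n : ℕ}
    (hγ : ∀ j < n, ‖γ j‖ ≤ 1) :
    ∑ k ∈ range n, ‖schurOutput γ h k‖ ^ 2 + ‖schurState γ h n‖ ^ 2 =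
      ∑ k ∈ range n, ‖h k‖ ^ 2 := by
  induction n with
  | zero => simp [schurState]
  | succ m ih =>
    have hstep := norm_sq_schurOutput_add_norm_sq_schurState_succ γ h (hγ m m.lt_succ_self)
    rw [sum_range_succ, sum_range_succ, ← ih fun j hj => hγ j (hj.trans m.lt_succ_self)]
    linarith

lemma sum_norm_sq_mul_prod_schurRho_sq (γ : ℕ → ℂ) {n : ℕ} (hγ : ∀ j < n, ‖γ j‖ ≤ 1) :
    ∑ i ∈ range n, ‖γ i‖ ^ 2 * ∏ j ∈ Ico (i + 1) n, schurRho γ j ^ 2 =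
      1 - ∏ j ∈ range n, schurRho γ j ^ 2 := by
  induction n with
  | zero => simp
  | succ m ih =>
    have hsplit : ∀ i ∈ range m, ‖γ i‖ ^ 2 * ∏ j ∈ Ico (i + 1) (m + 1), schurRho γ j ^ 2 =
        schurRho γ m ^ 2 * (‖γ i‖ ^ 2 * ∏ j ∈ Ico (i + 1) m, schurRho γ j ^ 2) := fun i hi => by
      rw [prod_Ico_succ_top (mem_range.1 hi)]
      ring
    rw [sum_range_succ, prod_range_succ, Ico_self, prod_empty, sum_congr rfl hsplit, ← mul_sum,
      ih fun j hj => hγ j (hj.trans m.lt_succ_self), schurRho_sq (hγ m m.lt_succ_self)]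
    ring

lemma norm_sq_schurState_le (γ h : ℕ → ℂ) {n : ℕ} (hγ : ∀ j < n, ‖γ j‖ ≤ 1) :
    ‖schurState γ h n‖ ^ 2 ≤
      (1 - ∏ j ∈ range n, schurRho γ j ^ 2) * ∑ k ∈ range n, ‖h k‖ ^ 2 := by
  set w : ℕ → ℝ := fun i => ‖γ i‖ * ∏ j ∈ Ico (i + 1) n, schurRho γ j
  have hnorm : ‖schurState γ h n‖ ≤ ∑ i ∈ range n, w i * ‖h i‖ := by
    refine (norm_sum_le _ _).trans_eq (sum_congr rfl fun i _ => ?_)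
    simp only [w, norm_mul, norm_prod, Complex.norm_real,
      Real.norm_of_nonneg (schurRho_nonneg γ _)]
  have hw : ∑ i ∈ range n, w i ^ 2 = 1 - ∏ j ∈ range n, schurRho γ j ^ 2 := by
    simp only [w, mul_pow, ← prod_pow]
    exact sum_norm_sq_mul_prod_schurRho_sq γ hγ
  calc ‖schurState γ h n‖ ^ 2 ≤ (∑ i ∈ range n, w i * ‖h i‖) ^ 2 :=
        pow_le_pow_left₀ (norm_nonneg _) hnorm 2
    _ ≤ (∑ i ∈ range n, w i ^ 2) * ∑ i ∈ range n, ‖h i‖ ^ 2 := sum_mul_sq_le_sq_mul_sq _ _ _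
    _ = _ := by rw [hw]

lemma prod_schurRho_sq_mul_le_sum_norm_sq_schurOutput (γ h : ℕ → ℂ) {n : ℕ}
    (hγ : ∀ j < n, ‖γ j‖ ≤ 1) :
    (∏ j ∈ range n, schurRho γ j) ^ 2 * ∑ k ∈ range n, ‖h k‖ ^ 2 ≤
      ∑ k ∈ range n, ‖schurOutput γ h k‖ ^ 2 := by
  have hsum := sum_norm_sq_schurOutput_add_norm_sq_schurState γ h hγ
  have hstate := norm_sq_schurState_le γ h hγ
  rw [← prod_pow]
  linarith

lemma isLowerTriangular_schurM (n : ℕ) (γ : ℕ → ℂ) : (schurM n γ).IsLowerTriangular :=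
  fun k i hik => by
    have hki : (k : ℕ) < i := hik
    simp only [schurM, of_apply, if_neg hki.ne, if_neg hki.not_gt]

lemma schurM_apply_self {n : ℕ} (γ : ℕ → ℂ) (k : Fin n) : schurM n γ k k = schurRho γ k := by
  simp [schurM, schurRho]

lemma isUnit_schurM {n : ℕ} {γ : ℕ → ℂ} (hγ : ∀ j < n, ‖γ j‖ < 1) : IsUnit (schurM n γ) := by
  rw [isUnit_iff_isUnit_det, det_of_isLowerTriangular _ (isLowerTriangular_schurM n γ),
    isUnit_iff_ne_zero, prod_ne_zero_iff]
  intro k _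
  rw [schurM_apply_self]
  exact_mod_cast (schurRho_pos (hγ k k.isLt)).ne'

lemma schurM_mulVec_apply {n : ℕ} (γ h : ℕ → ℂ) (k : Fin n) :
    (schurM n γ *ᵥ fun i => h i) k = schurOutput γ h k := by
  set entry : ℕ → ℂ := fun i =>
    (if (k : ℕ) = i then (schurRho γ k : ℂ)
      else if i < k then -γ i * (∏ j ∈ Ico (i + 1) k, (schurRho γ j : ℂ)) * starRingEnd ℂ (γ k)
      else 0) * h i
  have hrange : (schurM n γ *ᵥ fun i => h i) k = ∑ i ∈ range n, entry i :=
    (Fin.sum_univ_eq_sum_range entry n : _)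
  have hupper : ∀ i ∈ range n, i ∉ range (k + 1) → entry i = 0 := fun i _ hi => by
    simp only [mem_range] at hi
    simp only [entry, if_neg (show (k : ℕ) ≠ i by omega), if_neg (show ¬ i < k by omega), zero_mul]
  have hlower : ∀ i ∈ range k, entry i =
      -(starRingEnd ℂ (γ k) * (γ i * (∏ j ∈ Ico (i + 1) k, (schurRho γ j : ℂ)) * h i)) :=
    fun i hi => by
      have hik := mem_range.1 hi
      simp only [entry, if_neg hik.ne', if_pos hik]
      ring
  rw [hrange, ← sum_subset (range_subset_range.2 (Nat.succ_le_of_lt k.isLt)) hupper,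
    sum_range_succ, sum_congr rfl hlower, sum_neg_distrib, ← mul_sum]
  simp only [entry, ↓reduceIte, schurOutput, schurState]
  ring

lemma prod_schurRho_mul_norm_le_norm_schurM_mulVec {n : ℕ} {γ : ℕ → ℂ}
    (hγ : ∀ j < n, ‖γ j‖ ≤ 1) (h : Fin n → ℂ) :
    (∏ j ∈ range n, schurRho γ j) * ‖WithLp.toLp 2 h‖ ≤
      ‖WithLp.toLp 2 (schurM n γ *ᵥ h)‖ := by
  obtain ⟨H, rfl⟩ : ∃ H : ℕ → ℂ, (fun i : Fin n => H i) = h :=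
    ⟨fun i => if hi : i < n then h ⟨i, hi⟩ else 0, funext fun i => by simp⟩
  have hP : 0 ≤ ∏ j ∈ range n, schurRho γ j := prod_nonneg fun j _ => schurRho_nonneg γ j
  rw [← pow_le_pow_iff_left₀ (by positivity) (norm_nonneg _) two_ne_zero, mul_pow,
    EuclideanSpace.norm_sq_eq, EuclideanSpace.norm_sq_eq]
  simp only [schurM_mulVec_apply]
  rw [Fin.sum_univ_eq_sum_range (fun i => ‖H i‖ ^ 2),
    Fin.sum_univ_eq_sum_range (fun i => ‖schurOutput γ H i‖ ^ 2)]
  exact prod_schurRho_sq_mul_le_sum_norm_sq_schurOutput γ H hγ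

theorem stmt_8_general (n : ℕ) (γ : ℕ → ℂ) (hγ : ∀ j < n, ‖γ j‖ < 1) :
    IsUnit (schurM n γ) ∧
    (∀ h : Fin n → ℂ,
      ‖euc ((schurM n γ).mulVec h)‖
        ≥ (∏ j ∈ Finset.range n, Real.sqrt (1 - ‖γ j‖ ^ 2)) * ‖euc h‖) ∧
    (∀ h : Fin n → ℂ,
      ‖euc ((schurM n γ).conjTranspose.mulVec h)‖
        ≥ (∏ j ∈ Finset.range n, Real.sqrt (1 - ‖γ j‖ ^ 2)) * ‖euc h‖) := by
  have hunit := isUnit_schurM hγ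
  have hbound := prod_schurRho_mul_norm_le_norm_schurM_mulVec fun j hj => (hγ j hj).le
  exact ⟨hunit, hbound, mul_norm_le_norm_conjTranspose_mulVec hunit
    (prod_nonneg fun j _ => schurRho_nonneg γ j) hbound⟩

theorem stmt_8 (n : ℕ) (hn : 0 < n) (γ : ℕ → ℂ) (hγ : ∀ j < n, ‖γ j‖ < 1) :
    IsUnit (schurM n γ) ∧
    (∀ h : Fin n → ℂ,
      ‖euc ((schurM n γ).mulVec h)‖
        ≥ (∏ j ∈ Finset.range n, Real.sqrt (1 - ‖γ j‖ ^ 2)) * ‖euc h‖) ∧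
    (∀ h : Fin n → ℂ,
      ‖euc ((schurM n γ).conjTranspose.mulVec h)‖
        ≥ (∏ j ∈ Finset.range n, Real.sqrt (1 - ‖γ j‖ ^ 2)) * ‖euc h‖) :=
  stmt_8_general n γ hγ
end
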